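/- Let T > 0 and N ≥ 1 an integer. Let f : ℝ → ℂ be a continuous T-periodic function and let g : ℝ → ℂ be a continuous NT-periodic function with absolutely summable NT-Fourier coefficients. Then ∫_0^{NT} conj(f(x)) g(x) dx = (1/T) · ∫_0^T conj(f(x)) · B_T(g)(0,x) dx. -/

import Mathlib

/-!
Let `h = ∑_{j<N} g(· + jT)` be the `T`-periodization of `g`. Cutting `[0, NT]` into `N` cells
of length `T` turns `∫_0^{NT} u g` into `∫_0^T u h` for every `T`-periodic `u`. With `u = conj f`
this is the left-hand side; with `u(y) = e^{-2πiℓy/T}` it shows that `ĝ(2πℓ/T)` is `T` times the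
`ℓ`-th Fourier coefficient of `h`. These coefficients form a subfamily of the `NT`-coefficients
of `g`, hence are summable, and Fourier inversion gives `B_T(g)(0, ·) = T h`.
-/

open Real Finset

/-- Fourier transform on the torus of period `P`: `ĥ(ζ) = ∫_0^P e^{-iζy} h(y) dy`. -/
noncomputable def fhat (P : ℝ) (h : ℝ → ℂ) (ζ : ℝ) : ℂ :=
  ∫ y in (0:ℝ)..P, Complex.exp (-(Complex.I * (ζ : ℂ) * (y : ℂ))) * h y

/-- The `T`-periodic Bloch transform of a `P`-periodic function `g`:
`B_T(g)(ξ,x) = ∑_{ℓ ∈ ℤ} e^{2πiℓx/T} ĝ(ξ + 2πℓ/T)`. -/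
noncomputable def blochT (T P : ℝ) (g : ℝ → ℂ) (ξ x : ℝ) : ℂ :=
  ∑' ℓ : ℤ, Complex.exp (2 * (Real.pi : ℂ) * Complex.I * (ℓ : ℂ) * (x : ℂ) / (T : ℂ)) *
    fhat P g (ξ + 2 * Real.pi * (ℓ : ℝ) / T)

section Periodize

variable {E : Type*} [NormedAddCommGroup E]

def periodize (T : ℝ) (N : ℕ) (g : ℝ → E) (x : ℝ) : E :=
  ∑ j ∈ range N, g (x + j * T)

theorem continuous_periodize {g : ℝ → E} (hg : Continuous g) (T : ℝ) (N : ℕ) :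
    Continuous (periodize T N g) :=
  continuous_finsetSum _ fun _ _ => hg.comp (continuous_add_const _)

theorem periodic_periodize {T : ℝ} {N : ℕ} {g : ℝ → E} (hg : Function.Periodic g (N * T)) :
    Function.Periodic (periodize T N g) T := by
  intro x
  have hsplit := (sum_range_succ' (fun j : ℕ => g (x + j * T)) N).symm.trans
    (sum_range_succ _ N)
  simp only [Nat.cast_zero, zero_mul, add_zero, hg x, add_left_inj] at hsplit
  simp only [periodize, ← hsplit]
  refine sum_congr rfl fun j _ => ?_
  push_cast; ring_nf

theorem integral_zero_nat_mul_eq_integral_periodize [NormedSpace ℝ E] [CompleteSpace E] {g : ℝ → E}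
    (hg : Continuous g) (T : ℝ) (N : ℕ) :
    ∫ x in (0:ℝ)..N * T, g x = ∫ x in (0:ℝ)..T, periodize T N g x := by
  induction N with
  | zero => simp [periodize]
  | succ n ih =>
    have hcell : ∫ x in (n * T : ℝ)..(n + 1 : ℕ) * T, g x = ∫ x in (0:ℝ)..T, g (x + n * T) := by
      rw [intervalIntegral.integral_comp_add_right]; push_cast; ring_nf
    calc ∫ x in (0:ℝ)..(n + 1 : ℕ) * T, g x
        = (∫ x in (0:ℝ)..n * T, g x) + ∫ x in (n * T : ℝ)..(n + 1 : ℕ) * T, g x :=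
          (intervalIntegral.integral_add_adjacent_intervals (hg.intervalIntegrable _ _)
            (hg.intervalIntegrable _ _)).symm
      _ = (∫ x in (0:ℝ)..T, periodize T n g x) + ∫ x in (0:ℝ)..T, g (x + n * T) := by
          rw [ih, hcell]
      _ = ∫ x in (0:ℝ)..T, periodize T (n + 1) g x := by
          rw [← intervalIntegral.integral_add ((continuous_periodize hg T n).intervalIntegrable _ _)
            ((show Continuous fun x => g (x + n * T) by fun_prop).intervalIntegrable _ _)]
          simp only [periodize, sum_range_succ]

end Periodize

theorem integral_periodic_mul_eq_integral_mul_periodize {T : ℝ} {N : ℕ} {u g : ℝ → ℂ}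
    (hu : Continuous u) (hup : Function.Periodic u T) (hg : Continuous g) :
    ∫ x in (0:ℝ)..N * T, u x * g x = ∫ x in (0:ℝ)..T, u x * periodize T N g x := by
  rw [integral_zero_nat_mul_eq_integral_periodize (g := fun x => u x * g x) (hu.mul hg)]
  congr 1 with x
  simp only [periodize, mul_sum]
  exact sum_congr rfl fun j _ => by rw [hup.nat_mul j x]

theorem fhat_nat_mul_eq_fhat_periodize {T : ℝ} (hT : T ≠ 0) (N : ℕ) {g : ℝ → ℂ}
    (hg : Continuous g) (ℓ : ℤ) :
    fhat (N * T) g (2 * π * ℓ / T) = fhat T (periodize T N g) (2 * π * ℓ / T) := by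
  refine integral_periodic_mul_eq_integral_mul_periodize (by fun_prop) (fun y => ?_) hg
  have hexp : -(Complex.I * ((2 * π * ℓ / T : ℝ) : ℂ) * ((y + T : ℝ) : ℂ)) =
      -(Complex.I * ((2 * π * ℓ / T : ℝ) : ℂ) * (y : ℂ)) + (-ℓ : ℤ) * (2 * π * Complex.I) := by
    have hT' : (T : ℂ) ≠ 0 := by exact_mod_cast hT
    push_cast; field_simp; ring
  rw [hexp, Complex.exp_add, Complex.exp_int_mul_two_pi_mul_I, mul_one]

theorem fhat_eq_mul_fourierCoeff {T : ℝ} [hT : Fact (0 < T)] {h : ℝ → ℂ}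
    (hp : Function.Periodic h T) (k : ℤ) :
    fhat T h (2 * π * k / T) = T * fourierCoeff hp.lift k := by
  rw [fourierCoeff_eq_intervalIntegral _ k 0, zero_add, fhat, Complex.real_smul, ← mul_assoc]
  push_cast
  rw [one_div, mul_inv_cancel₀ (by exact_mod_cast hT.out.ne'), one_mul]
  refine intervalIntegral.integral_congr fun x _ => ?_
  rw [smul_eq_mul, fourier_coe_apply, hp.lift_coe]
  congr 2
  push_cast
  field_simp

theorem hasSum_exp_mul_fhat {T : ℝ} (hT : 0 < T) {h : ℝ → ℂ} (hc : Continuous h)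
    (hp : Function.Periodic h T) (hs : Summable fun ℓ : ℤ => ‖fhat T h (2 * π * ℓ / T)‖) (x : ℝ) :
    HasSum (fun ℓ : ℤ => Complex.exp (2 * π * Complex.I * ℓ * x / T) * fhat T h (2 * π * ℓ / T))
      (T * h x) := by
  have : Fact (0 < T) := ⟨hT⟩
  let H : C(AddCircle T, ℂ) :=
    ⟨hp.lift, (QuotientAddGroup.isQuotientMap_mk _).continuous_iff.mpr hc⟩
  have hcoeff : Summable (fourierCoeff H) := by
    refine Summable.of_norm ((hs.mul_left T⁻¹).congr fun k => ?_)
    rw [fhat_eq_mul_fourierCoeff hp, norm_mul, Complex.norm_real, norm_of_nonneg hT.le,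
      inv_mul_cancel_left₀ hT.ne']
    rfl
  have hterm : ∀ k : ℤ, Complex.exp (2 * π * Complex.I * k * x / T) * fhat T h (2 * π * k / T) =
      T * (fourierCoeff H k • fourier k (x : AddCircle T)) := fun k => by
    rw [fhat_eq_mul_fourierCoeff hp, fourier_coe_apply, smul_eq_mul]
    simp only [H, ContinuousMap.coe_mk]
    ring
  simp_rw [hterm, ← hp.lift_coe x]
  exact (has_pointwise_sum_fourier_series_of_summable hcoeff x).mul_left (T : ℂ)

/-- Second identity of Lemma 2.1: for `f` a `T`-periodic function and `g` an `NT`-periodic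
function, `∫_0^{NT} conj(f) g = (1/T) ∫_0^T conj(f(x)) B_T(g)(0,x) dx`. -/
theorem bloch_inner_product (T : ℝ) (hT : 0 < T) (N : ℕ) (hN : 1 ≤ N) (f g : ℝ → ℂ)
    (hfc : Continuous f) (hgc : Continuous g)
    (hfp : Function.Periodic f T) (hgp : Function.Periodic g (N * T))
    (hgs : Summable fun k : ℤ => ‖fhat (N * T) g (2 * π * (k : ℝ) / (N * T))‖) :
    (∫ x in (0:ℝ)..(N * T), starRingEnd ℂ (f x) * g x) =
      (1 / (T : ℂ)) * ∫ x in (0:ℝ)..T, starRingEnd ℂ (f x) * blochT T (N * T) g 0 x := by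
  have hN0 : (N : ℤ) ≠ 0 := by positivity
  have hfhat : ∀ ℓ : ℤ, fhat (N * T) g (2 * π * ℓ / T) = fhat T (periodize T N g) (2 * π * ℓ / T) :=
    fhat_nat_mul_eq_fhat_periodize hT.ne' N hgc
  have hsum : Summable fun ℓ : ℤ => ‖fhat T (periodize T N g) (2 * π * ℓ / T)‖ := by
    refine (hgs.comp_injective (mul_right_injective₀ hN0)).congr fun ℓ => ?_
    rw [Function.comp_apply, ← hfhat]
    congr 2
    push_cast
    field_simp
  have hbloch : ∀ x, blochT T (N * T) g 0 x = T * periodize T N g x := fun x => by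
    simp_rw [blochT, zero_add, hfhat]
    exact (hasSum_exp_mul_fhat hT (continuous_periodize hgc T N) (periodic_periodize hgp) hsum
      x).tsum_eq
  calc (∫ x in (0:ℝ)..(N * T), starRingEnd ℂ (f x) * g x)
      = ∫ x in (0:ℝ)..T, starRingEnd ℂ (f x) * periodize T N g x :=
        integral_periodic_mul_eq_integral_mul_periodize (by fun_prop) (hfp.comp _) hgc
    _ = (1 / (T : ℂ)) * ∫ x in (0:ℝ)..T, starRingEnd ℂ (f x) * blochT T (N * T) g 0 x := by
        simp_rw [hbloch, mul_left_comm _ (T : ℂ), intervalIntegral.integral_const_mul]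
        rw [one_div, inv_mul_cancel_left₀ (by exact_mod_cast hT.ne')]
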